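/- arXiv:0705.3897 — 2 statements merged into one kernel-verified Lean document; each statement's English description precedes it below -/
import Mathlib

section
/- Let Γ : ℕ → ℝ satisfy Γ n > 0 for all n and the relations Γ(n+1) * Γ(n-1) = (Γ n)^2 for all n ≥ 3. Then for every finite list ω of positive integers, (∏_{j ∈ ω} Γ (j + 2)) / (Γ 2)^(length ω) = (Γ 3 / Γ 2)^(sum ω). Consequently, for any two lists ω and ω′ of positive integers with sum ω = sum ω′ (partitions of the same integer), one has (∏_{j ∈ ω} Γ (j+2)) / (Γ 2)^(length ω) = (∏_{j ∈ ω′} Γ (j+2)) / (Γ 2)^(length ω′): the value X_γ associated to a dressed one-loop graph depends only on its number of external legs, not on the partition describing its vertex structure. -/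
/-- If the positive amplitudes `Γ n` satisfy the generalized Slavnov–Taylor identities
`Γ (n+1) * Γ (n-1) = (Γ n)^2` for all `n ≥ 3`, then for every partition `ω` (a list of
positive integers) the value `X_γ = (∏_{j ∈ ω} Γ (j+2)) / (Γ 2)^(length ω)` of the
associated dressed one-loop gravity graph equals `(Γ 3 / Γ 2)^(sum ω)`; consequently
`X_γ` depends only on the number `sum ω` of external legs, not on the partition. -/
theorem gravity_Xgamma_depends_only_on_legs
    (Γ : ℕ → ℝ) (hpos : ∀ n, 0 < Γ n)
    (hrel : ∀ n, 3 ≤ n → Γ (n + 1) * Γ (n - 1) = (Γ n) ^ 2) :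
    (∀ ω : List ℕ, (∀ j ∈ ω, 0 < j) →
      (ω.map (fun j => Γ (j + 2))).prod / (Γ 2) ^ ω.length
        = (Γ 3 / Γ 2) ^ ω.sum) ∧
    (∀ ω ω' : List ℕ, (∀ j ∈ ω, 0 < j) → (∀ j ∈ ω', 0 < j) → ω.sum = ω'.sum →
      (ω.map (fun j => Γ (j + 2))).prod / (Γ 2) ^ ω.length
        = (ω'.map (fun j => Γ (j + 2))).prod / (Γ 2) ^ ω'.length) := by
  have hne : ∀ n, Γ n ≠ 0 := fun n => (hpos n).ne'
  have key : ∀ n : ℕ, Γ (n + 2) = Γ 2 * (Γ 3 / Γ 2) ^ n := by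
    intro n
    induction n using Nat.strong_induction_on with
    | _ n ih =>
      match n with
      | 0 => simp
      | 1 =>
        rw [pow_one, mul_div_assoc', mul_comm, mul_div_assoc, div_self (hne 2), mul_one]
      | (m + 2) =>
        have h2 : Γ (m + 3 + 1) * Γ (m + 2) = (Γ (m + 3)) ^ 2 := hrel (m + 3) (by omega)
        have e1 : Γ (m + 2) = Γ 2 * (Γ 3 / Γ 2) ^ m := ih m (by omega)
        have e2 : Γ (m + 3) = Γ 2 * (Γ 3 / Γ 2) ^ (m + 1) := ih (m + 1) (by omega)
        have hstep : Γ (m + 4) = (Γ (m + 3)) ^ 2 / Γ (m + 2) := by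
          rw [eq_div_iff (hne (m + 2))]; exact h2
        rw [show m + 2 + 2 = m + 4 from rfl, hstep, e1, e2,
          div_eq_iff (mul_ne_zero (hne 2) (pow_ne_zero _ (div_ne_zero (hne 3) (hne 2))))]
        ring
  have main : ∀ ω : List ℕ, (∀ j ∈ ω, 0 < j) →
      (ω.map (fun j => Γ (j + 2))).prod / (Γ 2) ^ ω.length
        = (Γ 3 / Γ 2) ^ ω.sum := by
    intro ω _
    induction ω with
    | nil => simp
    | cons a t iht =>
      have iht' := iht (fun j hj => by exact (by assumption : ∀ j ∈ a :: t, 0 < j) j (List.mem_cons_of_mem _ hj))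
      simp only [List.map_cons, List.prod_cons, List.length_cons, List.sum_cons]
      rw [key a, pow_succ, pow_add, ← iht']
      field_simp
      rw [div_eq_div_iff (mul_ne_zero (hne 2) (pow_ne_zero _ (hne 2))) (pow_ne_zero _ (hne 2))]
      ring
  refine ⟨main, fun ω ω' h h' hs => ?_⟩
  rw [main ω h, main ω' h', hs]
end

section
/- Let Γ : ℕ → ℝ satisfy Γ n > 0 for all n and the relations Γ(n+1) * Γ(n-1) = (Γ n)^2 for all n ≥ 3. Then for every finite list ω of positive integers whose sum r = sum ω satisfies r ≥ 2, one has (∏_{j ∈ ω} Γ (j + 2)) / (Γ 2)^(length ω) = Γ r * Q^2, where Q = Γ 3 / (Γ 2)^((3 : ℝ)/2) with real exponentiation. That is, X_γ = Γ^{gr_{|ω|}} · Q^2 for every dressed one-loop graph γ identified with the partition ω. -/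
/-- If the positive amplitudes `Γ n` satisfy the generalized Slavnov–Taylor identities
`Γ (n+1) * Γ (n-1) = (Γ n)^2` for all `n ≥ 3`, then for every partition `ω` (a list of
positive integers) with `r = sum ω ≥ 2`, the value of the associated dressed one-loop
gravity graph satisfies `X_γ = Γ r * Q^2`, where `Q = Γ 3 / (Γ 2)^(3/2)` is the
invariant charge (real exponentiation). -/
theorem gravity_Xgamma_eq_Gamma_mul_Q_sq
    (Γ : ℕ → ℝ) (hpos : ∀ n, 0 < Γ n)
    (hrel : ∀ n, 3 ≤ n → Γ (n + 1) * Γ (n - 1) = (Γ n) ^ 2)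
    (ω : List ℕ) (hω : ∀ j ∈ ω, 0 < j) (hr : 2 ≤ ω.sum) :
    (ω.map (fun j => Γ (j + 2))).prod / (Γ 2) ^ ω.length
      = Γ ω.sum * (Γ 3 / (Γ 2) ^ ((3 : ℝ) / 2)) ^ 2 := by
  set q : ℝ := Γ 3 / Γ 2 with hq
  have h2 := hpos 2
  have h2ne : Γ 2 ≠ 0 := h2.ne'
  -- constant ratio
  have hstep : ∀ k, Γ (k + 3) = Γ (k + 2) * q := by
    intro k
    induction k with
    | zero => simp only [zero_add, hq]; field_simp
    | succ k ih =>
      have h := hrel (k + 3) (by omega)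
      rw [show k + 3 - 1 = k + 2 from rfl] at h
      have hk2 : Γ (k + 2) ≠ 0 := (hpos _).ne'
      have : Γ (k + 3 + 1) = Γ (k + 3) ^ 2 / Γ (k + 2) := by
        field_simp
        linarith [h]
      rw [show k + 1 + 3 = k + 3 + 1 from rfl, this, ih]
      field_simp
  -- geometric form
  have hgeom : ∀ k, Γ (k + 2) = Γ 2 * q ^ k := by
    intro k
    induction k with
    | zero => simp
    | succ k ih =>
      rw [show k + 1 + 2 = k + 3 from rfl, hstep k, ih, pow_succ]; ring
  -- product over the list
  have hprod : ∀ L : List ℕ, (L.map (fun j => Γ (j + 2))).prod = Γ 2 ^ L.length * q ^ L.sum := by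
    intro L
    induction L with
    | nil => simp
    | cons a l ih =>
      simp only [List.map_cons, List.prod_cons, List.length_cons, List.sum_cons,
        ih, hgeom a, pow_succ, pow_add]
      ring
  -- Q squared
  have hQ2 : (Γ 3 / (Γ 2) ^ ((3 : ℝ) / 2)) ^ 2 = Γ 3 ^ 2 / Γ 2 ^ 3 := by
    rw [div_pow, ← Real.rpow_natCast ((Γ 2) ^ ((3:ℝ)/2)) 2, ← Real.rpow_mul h2.le,
      show (3:ℝ)/2*((2:ℕ):ℝ) = ((3:ℕ):ℝ) by push_cast; ring, Real.rpow_natCast]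
  obtain ⟨s, hs⟩ : ∃ s, ω.sum = s + 2 := ⟨ω.sum - 2, by omega⟩
  rw [hprod ω, hQ2, hs, hgeom s]
  have h3ne : Γ 3 ≠ 0 := (hpos 3).ne'
  rw [hq]
  field_simp
  have hinv : (Γ 2)⁻¹ ^ 2 * Γ 2 ^ 2 = 1 := by rw [← mul_pow, inv_mul_cancel₀ h2ne, one_pow]
  linear_combination (Γ 3 ^ 2 * Γ 3 ^ s * (Γ 2)⁻¹ ^ s) * hinv
end
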